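/- Let q ≥ 3, h = 0 and β = β_c. Then the set of global minimum points of f_{β_c,0} on the simplex ℋ consists of exactly q+1 points: the symmetric point (1/q, …, 1/q) together with the q coordinate permutations of the vector ((q−1)/q, 1/(q(q−1)), …, 1/(q(q−1))). -/

import Mathlib

/-!
At `h = 0` the free energy is the separable function `∑ i, F (x i)` with site potential
`F u = u log (q u) - β u² / 2`. At a minimiser every coordinate is positive, since `u log u`
has slope `-∞` at `0`, and the Lagrange condition makes `F' (x i) = log (q x i) + 1 - β x i`
independent of `i`. As `F'` increases on `(0, β⁻¹]` and decreases afterwards, and two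
coordinates above `β⁻¹` could be spread apart because `F` is strictly concave there, a
minimiser has one coordinate `s ≥ 1 / q` and all the others equal to `(1 - s) / (q - 1)`.

This reduces the problem to `G s = f (s, (1 - s) / (q - 1), …) - f (1 / q, …, 1 / q)`. Its
derivative `g s = F' s - F' ((1 - s) / (q - 1))` vanishes at `1 / q` for every `β`, and at
`β = β_c` also at `1 / 2` and at `(q - 1) / q`. Since `g' s = 1 / (s (1 - s)) - β q / (q - 1)`,
`g` is strictly concave on `(0, 1 / 2]` and strictly convex on `[1 / 2, 1)`, so it has no
further zeros and `G` increases, decreases and increases again between them. With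
`G (1 / q) = G ((q - 1) / q) = 0` these are the only zeros of `G ≥ 0` on `[1 / q, 1)`.
-/

open Finset

noncomputable section

namespace CWP

/-- The probability simplex ℋ in ℝ^q. -/
def simplexH (q : ℕ) : Set (Fin q → ℝ) :=
  {x | (∑ i, x i) = 1 ∧ ∀ i, 0 ≤ x i}

/-- The free-energy functional f_{β,h} of the Curie-Weiss-Potts model. -/
def fFE (q : ℕ) [NeZero q] (β h : ℝ) (x : Fin q → ℝ) : ℝ :=
  (∑ i, x i * Real.log (q * x i)) - β / 2 * (∑ i, x i ^ 2) - h * x 0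

/-- The set of global minimum points of f_{β,h} on the simplex ℋ. -/
def minSetF (q : ℕ) [NeZero q] (β h : ℝ) : Set (Fin q → ℝ) :=
  {x | x ∈ simplexH q ∧ ∀ y ∈ simplexH q, fFE q β h x ≤ fFE q β h y}

/-- h₀ = log(q-1) - 2(q-2)/q. -/
def h0 (q : ℕ) : ℝ := Real.log ((q : ℝ) - 1) - 2 * ((q : ℝ) - 2) / q

/-- The critical line h_T. -/
def onCriticalLine (q : ℕ) (β h : ℝ) : Prop :=
  0 ≤ h ∧ h < h0 q ∧ h = Real.log ((q : ℝ) - 1) - β * ((q : ℝ) - 2) / (2 * ((q : ℝ) - 1))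

/-- The critical inverse temperature β_c for q > 2. -/
def betaC (q : ℕ) : ℝ := 2 * ((q : ℝ) - 1) / ((q : ℝ) - 2) * Real.log ((q : ℝ) - 1)

open Set

lemma setOf_exists_perm_comp_ite_eq_range {ι α : Type*} [DecidableEq ι] (j₀ : ι) (a b : α) :
    {y | ∃ π : Equiv.Perm ι, y = (fun i => if i = j₀ then a else b) ∘ π}
      = Set.range fun j i => if i = j then a else b := by
  ext y
  constructor
  · rintro ⟨π, rfl⟩
    exact ⟨π.symm j₀, funext fun i => by simp [Equiv.eq_symm_apply]⟩
  · rintro ⟨j, rfl⟩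
    exact ⟨Equiv.swap j j₀, funext fun i => by simp [Equiv.swap_apply_eq_iff]⟩

lemma ncard_insert_const_range_ite {ι α : Type*} [Fintype ι] [DecidableEq ι] {a b c : α}
    (hab : a ≠ b) (hca : c ≠ a) :
    (insert (fun _ : ι => c) (Set.range fun j i => if i = j then a else b)).ncard
      = Fintype.card ι + 1 := by
  have hinj : Function.Injective fun j (i : ι) => if i = j then a else b := by
    intro j k h
    by_contra hjk
    exact hab (by simpa [hjk] using congrFun h j)
  rw [Set.ncard_insert_of_notMem, Set.ncard_range_of_injective hinj, Nat.card_eq_fintype_card]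
  rintro ⟨j, hj⟩
  exact hca (by simpa using (congrFun hj j).symm)

section Transfer

variable {ι : Type*} [DecidableEq ι]

def transfer (x : ι → ℝ) (i j : ι) (t : ℝ) : ι → ℝ :=
  Function.update (Function.update x i (x i + t)) j (x j - t)

variable {x : ι → ℝ} {i j : ι} {t : ℝ}

lemma transfer_apply_left (hij : i ≠ j) : transfer x i j t i = x i + t := by
  simp [transfer, hij]

lemma transfer_apply_right : transfer x i j t j = x j - t := by
  simp [transfer]

lemma transfer_apply_of_ne {k : ι} (hi : k ≠ i) (hj : k ≠ j) : transfer x i j t k = x k := by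
  simp [transfer, hi, hj]

variable [Fintype ι]

lemma sum_comp_transfer (F : ℝ → ℝ) (hij : i ≠ j) :
    ∑ k, F (transfer x i j t k)
      = ∑ k, F (x k) + (F (x i + t) - F (x i)) + (F (x j - t) - F (x j)) := by
  have h := Fintype.sum_eq_add (f := fun k => F (transfer x i j t k) - F (x k)) i j hij
    fun k hk => by simp [transfer_apply_of_ne hk.1 hk.2]
  rw [Finset.sum_sub_distrib, transfer_apply_left hij, transfer_apply_right] at h
  linarith

lemma transfer_mem_stdSimplex (hx : x ∈ stdSimplex ℝ ι) (hij : i ≠ j)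
    (ht : t ∈ Icc (-x i) (x j)) :
    transfer x i j t ∈ stdSimplex ℝ ι := by
  refine ⟨fun k => ?_, ?_⟩
  · by_cases hkj : k = j
    · rw [hkj, transfer_apply_right]; linarith [ht.2]
    by_cases hki : k = i
    · rw [hki, transfer_apply_left hij]; linarith [ht.1]
    rw [transfer_apply_of_ne hki hkj]; exact hx.1 k
  · have h := sum_comp_transfer (x := x) (t := t) (fun u => u) hij
    rw [h, hx.2]
    ring

variable {F : ℝ → ℝ}

lemma add_le_add_of_isMinOn_stdSimplex (hxs : x ∈ stdSimplex ℝ ι)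
    (hx : IsMinOn (fun y => ∑ k, F (y k)) (stdSimplex ℝ ι) x) (hij : i ≠ j)
    (ht : t ∈ Icc (-x i) (x j)) :
    F (x i) + F (x j) ≤ F (x i + t) + F (x j - t) := by
  have h := isMinOn_iff.1 hx _ (transfer_mem_stdSimplex hxs hij ht)
  rw [sum_comp_transfer F hij] at h
  linarith

lemma eq_of_hasDerivAt_of_isMinOn_stdSimplex (hxs : x ∈ stdSimplex ℝ ι)
    (hx : IsMinOn (fun y => ∑ k, F (y k)) (stdSimplex ℝ ι) x) (hij : i ≠ j)
    (hi : 0 < x i) (hj : 0 < x j) {a b : ℝ} (ha : HasDerivAt F a (x i))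
    (hb : HasDerivAt F b (x j)) : a = b := by
  have hmin : IsLocalMin (fun t => F (x i + t) + F (x j - t)) 0 := by
    filter_upwards [Ioo_mem_nhds (neg_lt_zero.2 hi) hj] with t ht
    simpa using add_le_add_of_isMinOn_stdSimplex hxs hx hij (Ioo_subset_Icc_self ht)
  have hderiv : HasDerivAt (fun t => F (x i + t) + F (x j - t)) (a + -b) 0 :=
    (HasDerivAt.comp_const_add _ _ (by simpa using ha)).add
      (HasDerivAt.comp_const_sub _ _ (by simpa using hb))
  linarith [hmin.hasDerivAt_eq_zero hderiv]

end Transfer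

section SitePotential

open Real

def sitePotential (Q β u : ℝ) : ℝ := u * log (Q * u) - β / 2 * u ^ 2

def sitePotentialDeriv (Q β u : ℝ) : ℝ := log (Q * u) + 1 - β * u

lemma fFE_zero_eq_sum (q : ℕ) [NeZero q] (β : ℝ) (x : Fin q → ℝ) :
    fFE q β 0 x = ∑ i, sitePotential q β (x i) := by
  simp [fFE, sitePotential, Finset.sum_sub_distrib, Finset.mul_sum]

variable {Q β : ℝ}

lemma continuous_sitePotential : Continuous (sitePotential Q β) := by
  unfold sitePotential
  by_cases hQ : Q = 0
  · simp only [hQ, zero_mul, log_zero, mul_zero, zero_sub]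
    fun_prop
  have h : (fun u => u * log (Q * u)) = fun u => Q⁻¹ * ((Q * u) * log (Q * u)) := by
    ext u; field_simp
  have : Continuous fun u => u * log (Q * u) := by
    rw [h]; exact continuous_const.mul (continuous_mul_log.comp (continuous_const_mul Q))
  exact this.sub (by fun_prop)

lemma hasDerivAt_sitePotential (hQ : Q ≠ 0) {u : ℝ} (hu : u ≠ 0) :
    HasDerivAt (sitePotential Q β) (sitePotentialDeriv Q β u) u := by
  have hlog := ((hasDerivAt_id' u).const_mul Q).log (mul_ne_zero hQ hu)
  refine (((hasDerivAt_id' u).mul hlog).sub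
    ((hasDerivAt_pow 2 u).const_mul (β / 2))).congr_deriv ?_
  simp only [sitePotentialDeriv]
  field_simp
  ring

lemma hasDerivAt_sitePotentialDeriv (hQ : Q ≠ 0) {u : ℝ} (hu : u ≠ 0) :
    HasDerivAt (sitePotentialDeriv Q β) (u⁻¹ - β) u := by
  have hlog := ((hasDerivAt_id' u).const_mul Q).log (mul_ne_zero hQ hu)
  refine ((hlog.add_const 1).sub ((hasDerivAt_id' u).const_mul β)).congr_deriv ?_
  field_simp

lemma continuousOn_sitePotentialDeriv (hQ : Q ≠ 0) :
    ContinuousOn (sitePotentialDeriv Q β) (Ioi 0) :=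
  fun _ hu => (hasDerivAt_sitePotentialDeriv hQ (ne_of_gt hu)).continuousAt.continuousWithinAt

lemma strictMonoOn_sitePotentialDeriv (hQ : Q ≠ 0) (hβ : 0 < β) :
    StrictMonoOn (sitePotentialDeriv Q β) (Ioc 0 β⁻¹) := by
  refine strictMonoOn_of_deriv_pos (convex_Ioc 0 β⁻¹)
    ((continuousOn_sitePotentialDeriv hQ).mono Ioc_subset_Ioi_self) fun u hu => ?_
  rw [interior_Ioc] at hu
  rw [(hasDerivAt_sitePotentialDeriv hQ (ne_of_gt hu.1)).deriv, sub_pos]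
  exact (lt_inv_comm₀ hu.1 hβ).1 hu.2

lemma strictAntiOn_sitePotentialDeriv (hQ : Q ≠ 0) (hβ : 0 < β) :
    StrictAntiOn (sitePotentialDeriv Q β) (Ici β⁻¹) := by
  refine strictAntiOn_of_deriv_neg (convex_Ici β⁻¹)
    ((continuousOn_sitePotentialDeriv hQ).mono fun u hu => (inv_pos.2 hβ).trans_le hu)
    fun u hu => ?_
  rw [interior_Ici] at hu
  have hu0 : 0 < u := (inv_pos.2 hβ).trans hu
  rw [(hasDerivAt_sitePotentialDeriv hQ hu0.ne').deriv, sub_neg]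
  exact (inv_lt_comm₀ hβ hu0).1 hu

lemma strictConcaveOn_sitePotential (hQ : Q ≠ 0) (hβ : 0 < β) :
    StrictConcaveOn ℝ (Ici β⁻¹) (sitePotential Q β) := by
  refine StrictAntiOn.strictConcaveOn_of_deriv (convex_Ici β⁻¹)
    continuous_sitePotential.continuousOn ?_
  rw [interior_Ici]
  refine ((strictAntiOn_sitePotentialDeriv hQ hβ).mono Ioi_subset_Ici_self).congr fun u hu => ?_
  exact ((hasDerivAt_sitePotential hQ ((inv_pos.2 hβ).trans hu).ne').deriv).symm

lemma exists_sitePotential_add_lt (hQ : 0 < Q) {a : ℝ} (ha : 0 < a) :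
    ∃ t ∈ Icc 0 a, sitePotential Q β t + sitePotential Q β (a - t)
      < sitePotential Q β 0 + sitePotential Q β a := by
  -- chosen so that `t log (t / a) = -t - |β| a t` beats the quadratic gain `β t (a - t)`
  set t := a * exp (-(|β| * a) - 1) with ht
  have hexp : exp (-(|β| * a) - 1) < 1 := exp_lt_one_iff.2 (by nlinarith [abs_nonneg β])
  have ht0 : 0 < t := by positivity
  have hta : t < a := by nlinarith
  refine ⟨t, ⟨ht0.le, hta.le⟩, ?_⟩
  have hlog_t : log (Q * t) = log (Q * a) + (-(|β| * a) - 1) := by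
    rw [ht, ← mul_assoc, log_mul (by positivity) (exp_pos _).ne', log_exp]
  have hlog_at : log (Q * (a - t)) ≤ log (Q * a) :=
    log_le_log (by nlinarith) (by nlinarith)
  have hquad : β * t * (a - t) ≤ |β| * a * t := by
    have h1 : β * (t * (a - t)) ≤ |β| * (t * (a - t)) :=
      mul_le_mul_of_nonneg_right (le_abs_self β) (by nlinarith)
    nlinarith [mul_nonneg (abs_nonneg β) (mul_self_nonneg t)]
  simp only [sitePotential, mul_zero, log_zero]
  rw [hlog_t]
  nlinarith [mul_le_mul_of_nonneg_left hlog_at (sub_nonneg.2 hta.le)]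

end SitePotential

section Minimizers

variable {ι : Type*} [Fintype ι] [DecidableEq ι] {Q β : ℝ} {x : ι → ℝ}

lemma pos_of_isMinOn_sitePotential (hQ : 0 < Q) (hxs : x ∈ stdSimplex ℝ ι)
    (hx : IsMinOn (fun y => ∑ k, sitePotential Q β (y k)) (stdSimplex ℝ ι) x) (i : ι) :
    0 < x i := by
  refine (hxs.1 i).lt_of_ne' fun hi => ?_
  obtain ⟨j, hj⟩ : ∃ j, 0 < x j := by
    by_contra! h
    linarith [hxs.2, Finset.sum_nonpos (s := univ) fun j _ => h j]
  have hij : i ≠ j := by rintro rfl; linarith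
  obtain ⟨t, ht, hlt⟩ := exists_sitePotential_add_lt (β := β) hQ hj
  have hle := add_le_add_of_isMinOn_stdSimplex hxs hx hij ⟨by linarith [ht.1], ht.2⟩
  rw [hi, zero_add] at hle
  linarith

lemma sitePotentialDeriv_eq_of_isMinOn (hQ : 0 < Q) (hxs : x ∈ stdSimplex ℝ ι)
    (hx : IsMinOn (fun y => ∑ k, sitePotential Q β (y k)) (stdSimplex ℝ ι) x) (i j : ι) :
    sitePotentialDeriv Q β (x i) = sitePotentialDeriv Q β (x j) := by
  rcases eq_or_ne i j with rfl | hij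
  · rfl
  have hpos := pos_of_isMinOn_sitePotential hQ hxs hx
  exact eq_of_hasDerivAt_of_isMinOn_stdSimplex hxs hx hij (hpos i) (hpos j)
    (hasDerivAt_sitePotential hQ.ne' (hpos i).ne') (hasDerivAt_sitePotential hQ.ne' (hpos j).ne')

lemma le_inv_of_isMinOn_sitePotential (hQ : 0 < Q) (hβ : 0 < β) (hxs : x ∈ stdSimplex ℝ ι)
    (hx : IsMinOn (fun y => ∑ k, sitePotential Q β (y k)) (stdSimplex ℝ ι) x) {i j : ι}
    (hij : i ≠ j) (hi : β⁻¹ < x i) : x j ≤ β⁻¹ := by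
  by_contra! hj
  have heq : x i = x j := (strictAntiOn_sitePotentialDeriv hQ.ne' hβ).injOn hi.le hj.le
    (sitePotentialDeriv_eq_of_isMinOn hQ hxs hx i j)
  have hspread := add_le_add_of_isMinOn_stdSimplex hxs hx hij
    (t := x i - β⁻¹) ⟨by linarith [inv_pos.2 hβ], by linarith [inv_pos.2 hβ]⟩
  have hconc := (strictConcaveOn_sitePotential hQ.ne' hβ).2
    (Set.mem_Ici.2 (by linarith) : x i + (x i - β⁻¹) ∈ Ici β⁻¹) (Set.mem_Ici.2 le_rfl)
    (by linarith : x i + (x i - β⁻¹) ≠ β⁻¹) (by norm_num : (0 : ℝ) < 1 / 2)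
    (by norm_num : (0 : ℝ) < 1 / 2) (by norm_num)
  simp only [smul_eq_mul] at hconc
  rw [show 1 / 2 * (x i + (x i - β⁻¹)) + 1 / 2 * β⁻¹ = x i by ring] at hconc
  rw [← heq, show x i - (x i - β⁻¹) = β⁻¹ by ring] at hspread
  linarith

end Minimizers

section TwoLevel

variable {q : ℕ}

def twoLevel (q : ℕ) (j : Fin q) (s : ℝ) : Fin q → ℝ :=
  fun i => if i = j then s else (1 - s) / (q - 1)

lemma sum_ite_eq_add_mul (F : ℝ → ℝ) (j : Fin q) (a b : ℝ) :
    ∑ i, F (if i = j then a else b) = F a + (q - 1) * F b := by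
  calc ∑ i, F (if i = j then a else b) = ∑ i, (F b + if i = j then F a - F b else 0) := by
        refine Finset.sum_congr rfl fun i _ => ?_
        split_ifs <;> ring
    _ = F a + (q - 1) * F b := by
        simp [Finset.sum_add_distrib]
        ring

lemma exists_eq_twoLevel_of_isMinOn {β : ℝ} (hq : 2 ≤ q) (hβ : 0 < β) {x : Fin q → ℝ}
    (hxs : x ∈ stdSimplex ℝ (Fin q))
    (hx : IsMinOn (fun y => ∑ k, sitePotential q β (y k)) (stdSimplex ℝ (Fin q)) x) :
    ∃ j, ∃ s ∈ Ico (1 / q : ℝ) 1, x = twoLevel q j s := by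
  have hq' : (2 : ℝ) ≤ q := by exact_mod_cast hq
  have hQ : (0 : ℝ) < q := by linarith
  have hpos := pos_of_isMinOn_sitePotential hQ hxs hx
  have : Nontrivial (Fin q) := Fin.nontrivial_iff_two_le.2 hq
  obtain ⟨j, -, hjmax⟩ := Finset.exists_max_image univ x univ_nonempty
  obtain ⟨i₀, hi₀⟩ := exists_ne j
  have hsmall : ∀ i ≠ j, x i ≤ β⁻¹ := fun i hij => by
    by_contra! h
    exact (le_inv_of_isMinOn_sitePotential hQ hβ hxs hx hij.symm
      (h.trans_le (hjmax i (mem_univ i)))).not_gt h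
  have hconst : ∀ i ≠ j, x i = x i₀ := fun i hij =>
    (strictMonoOn_sitePotentialDeriv hQ.ne' hβ).injOn ⟨hpos i, hsmall i hij⟩
      ⟨hpos i₀, hsmall i₀ hi₀⟩ (sitePotentialDeriv_eq_of_isMinOn hQ hxs hx i i₀)
  have hsum : x j + (q - 1) * x i₀ = 1 := by
    rw [← sum_ite_eq_add_mul (fun u => u) j, ← hxs.2]
    refine Finset.sum_congr rfl fun i _ => ?_
    split_ifs with h
    · rw [h]
    · exact (hconst i h).symm
  refine ⟨j, x j, ⟨?_, ?_⟩, ?_⟩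
  · rw [div_le_iff₀ hQ]
    nlinarith [hjmax i₀ (mem_univ _)]
  · nlinarith [hpos i₀]
  · ext i
    simp only [twoLevel]
    split_ifs with h
    · rw [h]
    · rw [hconst i h, eq_div_iff (by linarith)]
      linarith

lemma twoLevel_mem_simplexH (hq : 1 < q) (j : Fin q) {s : ℝ} (hs : s ∈ Icc (0 : ℝ) 1) :
    twoLevel q j s ∈ simplexH q := by
  have hq1 : (0 : ℝ) < q - 1 := by
    have : (1 : ℝ) < q := by exact_mod_cast hq
    linarith
  refine ⟨?_, fun i => ?_⟩
  · simp only [twoLevel]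
    rw [sum_ite_eq_add_mul (fun u => u)]
    field_simp
    ring
  · simp only [twoLevel]
    split_ifs
    · exact hs.1
    · exact div_nonneg (by linarith [hs.2]) hq1.le

lemma twoLevel_one_div (hq : 1 < q) (j : Fin q) :
    twoLevel q j (1 / q) = fun _ => 1 / (q : ℝ) := by
  have hq1 : (q : ℝ) - 1 ≠ 0 := by
    have : (1 : ℝ) < q := by exact_mod_cast hq
    linarith
  ext i
  simp only [twoLevel]
  split_ifs
  · rfl
  · field_simp

lemma twoLevel_peak (hq : 1 < q) (j : Fin q) :
    twoLevel q j ((q - 1) / q)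
      = fun i => if i = j then ((q : ℝ) - 1) / q else 1 / (q * ((q : ℝ) - 1)) := by
  have hq1 : (q : ℝ) - 1 ≠ 0 := by
    have : (1 : ℝ) < q := by exact_mod_cast hq
    linarith
  ext i
  simp only [twoLevel]
  split_ifs
  · rfl
  · field_simp
    ring

end TwoLevel

section ReducedEnergy

open Real

def reducedEnergy (Q β s : ℝ) : ℝ :=
  sitePotential Q β s + (Q - 1) * sitePotential Q β ((1 - s) / (Q - 1))
    - Q * sitePotential Q β (1 / Q)

def reducedEnergyDeriv (Q β s : ℝ) : ℝ :=
  sitePotentialDeriv Q β s - sitePotentialDeriv Q β ((1 - s) / (Q - 1))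

variable {Q β s : ℝ}

lemma hasDerivAt_reducedEnergy (hQ : 1 < Q) (hs : s ∈ Ioo (0 : ℝ) 1) :
    HasDerivAt (reducedEnergy Q β) (reducedEnergyDeriv Q β s) s := by
  have hQ1 : Q - 1 ≠ 0 := by linarith
  have hb : (1 - s) / (Q - 1) ≠ 0 := div_ne_zero (by linarith [hs.2]) hQ1
  have hinner := ((hasDerivAt_id' s).const_sub 1).div_const (Q - 1)
  have h := ((hasDerivAt_sitePotential (β := β) (by linarith) hs.1.ne').add
    (((hasDerivAt_sitePotential (β := β) (by linarith) hb).comp s hinner).const_mul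
      (Q - 1))).sub_const (Q * sitePotential Q β (1 / Q))
  refine h.congr_deriv ?_
  simp only [reducedEnergyDeriv]
  field_simp
  ring

lemma hasDerivAt_reducedEnergyDeriv (hQ : 1 < Q) (hs : s ∈ Ioo (0 : ℝ) 1) :
    HasDerivAt (reducedEnergyDeriv Q β) (s⁻¹ + (1 - s)⁻¹ - β * Q / (Q - 1)) s := by
  have hQ1 : Q - 1 ≠ 0 := by linarith
  have h1s : 1 - s ≠ 0 := by linarith [hs.2]
  have hinner := ((hasDerivAt_id' s).const_sub 1).div_const (Q - 1)
  have h := (hasDerivAt_sitePotentialDeriv (β := β) (by linarith) hs.1.ne').sub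
    ((hasDerivAt_sitePotentialDeriv (β := β) (by linarith) (div_ne_zero h1s hQ1)).comp s hinner)
  refine h.congr_deriv ?_
  field_simp
  ring

lemma continuousOn_reducedEnergy (hQ : 1 < Q) :
    ContinuousOn (reducedEnergy Q β) (Ioo (0 : ℝ) 1) :=
  fun _ hs => (hasDerivAt_reducedEnergy hQ hs).continuousAt.continuousWithinAt

lemma continuousOn_reducedEnergyDeriv (hQ : 1 < Q) :
    ContinuousOn (reducedEnergyDeriv Q β) (Ioo (0 : ℝ) 1) :=
  fun _ hs => (hasDerivAt_reducedEnergyDeriv hQ hs).continuousAt.continuousWithinAt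

lemma inv_add_inv_one_sub_sub {a b : ℝ} (ha : a ≠ 0) (hb : b ≠ 0) (ha1 : 1 - a ≠ 0)
    (hb1 : 1 - b ≠ 0) :
    a⁻¹ + (1 - a)⁻¹ - (b⁻¹ + (1 - b)⁻¹)
      = (b - a) * (1 - a - b) / (a * b * ((1 - a) * (1 - b))) := by
  field_simp
  ring

lemma strictConcaveOn_reducedEnergyDeriv (hQ : 1 < Q) :
    StrictConcaveOn ℝ (Ioc 0 (1 / 2)) (reducedEnergyDeriv Q β) := by
  refine StrictAntiOn.strictConcaveOn_of_deriv (convex_Ioc _ _)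
    ((continuousOn_reducedEnergyDeriv hQ).mono fun t ht => ⟨ht.1, by linarith [ht.2]⟩) ?_
  rw [interior_Ioc]
  intro a ha b hb hab
  have ha1 : 0 < 1 - a := by linarith [ha.2]
  have hb1 : 0 < 1 - b := by linarith [hb.2]
  have hdiff := inv_add_inv_one_sub_sub ha.1.ne' hb.1.ne' ha1.ne' hb1.ne'
  have hpos : 0 < (b - a) * (1 - a - b) / (a * b * ((1 - a) * (1 - b))) :=
    div_pos (mul_pos (by linarith) (by linarith [ha.2, hb.2]))
      (mul_pos (mul_pos ha.1 hb.1) (mul_pos ha1 hb1))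
  rw [(hasDerivAt_reducedEnergyDeriv hQ ⟨ha.1, by linarith [ha.2]⟩).deriv,
    (hasDerivAt_reducedEnergyDeriv hQ ⟨hb.1, by linarith [hb.2]⟩).deriv]
  linarith

lemma strictConvexOn_reducedEnergyDeriv (hQ : 1 < Q) :
    StrictConvexOn ℝ (Ico (1 / 2) 1) (reducedEnergyDeriv Q β) := by
  refine StrictMonoOn.strictConvexOn_of_deriv (convex_Ico _ _)
    ((continuousOn_reducedEnergyDeriv hQ).mono fun t ht => ⟨by linarith [ht.1], ht.2⟩) ?_
  rw [interior_Ico]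
  intro a ha b hb hab
  have ha0 : 0 < a := by linarith [ha.1]
  have hb0 : 0 < b := by linarith [hb.1]
  have ha1 : 0 < 1 - a := by linarith [ha.2]
  have hb1 : 0 < 1 - b := by linarith [hb.2]
  have hdiff := inv_add_inv_one_sub_sub ha0.ne' hb0.ne' ha1.ne' hb1.ne'
  have hneg : (b - a) * (1 - a - b) / (a * b * ((1 - a) * (1 - b))) < 0 :=
    div_neg_of_neg_of_pos (mul_neg_of_pos_of_neg (by linarith) (by linarith [ha.1, hb.1]))
      (mul_pos (mul_pos ha0 hb0) (mul_pos ha1 hb1))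
  rw [(hasDerivAt_reducedEnergyDeriv hQ ⟨ha0, ha.2⟩).deriv,
    (hasDerivAt_reducedEnergyDeriv hQ ⟨hb0, hb.2⟩).deriv]
  linarith

end ReducedEnergy

section CriticalReducedEnergy

open Real

variable {Q β s : ℝ}

lemma reducedEnergy_one_div (hQ : 1 < Q) : reducedEnergy Q β (1 / Q) = 0 := by
  have h : (1 - 1 / Q) / (Q - 1) = 1 / Q := by
    field_simp [show Q - 1 ≠ 0 by linarith]
  rw [reducedEnergy, h]
  ring

lemma reducedEnergyDeriv_one_div (hQ : 1 < Q) : reducedEnergyDeriv Q β (1 / Q) = 0 := by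
  have h : (1 - 1 / Q) / (Q - 1) = 1 / Q := by
    field_simp [show Q - 1 ≠ 0 by linarith]
  rw [reducedEnergyDeriv, h, sub_self]

lemma strictMonoOn_reducedEnergy (hQ : 1 < Q) {a b : ℝ} (ha : 0 < a) (hb : b < 1)
    (hg : ∀ t ∈ Ioo a b, 0 < reducedEnergyDeriv Q β t) :
    StrictMonoOn (reducedEnergy Q β) (Icc a b) := by
  refine strictMonoOn_of_deriv_pos (convex_Icc a b) ((continuousOn_reducedEnergy hQ).mono
    fun t ht => ⟨ha.trans_le ht.1, ht.2.trans_lt hb⟩) fun t ht => ?_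
  rw [interior_Icc] at ht
  rw [(hasDerivAt_reducedEnergy hQ ⟨ha.trans ht.1, ht.2.trans hb⟩).deriv]
  exact hg t ht

lemma strictAntiOn_reducedEnergy (hQ : 1 < Q) {a b : ℝ} (ha : 0 < a) (hb : b < 1)
    (hg : ∀ t ∈ Ioo a b, reducedEnergyDeriv Q β t < 0) :
    StrictAntiOn (reducedEnergy Q β) (Icc a b) := by
  refine strictAntiOn_of_deriv_neg (convex_Icc a b) ((continuousOn_reducedEnergy hQ).mono
    fun t ht => ⟨ha.trans_le ht.1, ht.2.trans_lt hb⟩) fun t ht => ?_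
  rw [interior_Icc] at ht
  rw [(hasDerivAt_reducedEnergy hQ ⟨ha.trans ht.1, ht.2.trans hb⟩).deriv]
  exact hg t ht

lemma one_div_lt_half (hQ : 2 < Q) : 1 / Q < 1 / 2 := by
  rw [div_lt_div_iff₀ (by linarith) (by norm_num)]; linarith

lemma half_lt_peak (hQ : 2 < Q) : 1 / 2 < (Q - 1) / Q := by
  rw [div_lt_div_iff₀ (by norm_num) (by linarith)]; linarith

lemma peak_lt_one (hQ : 0 < Q) : (Q - 1) / Q < 1 := by
  rw [div_lt_one hQ]; linarith

variable (hβ : 2 * (Q - 1) * log (Q - 1) = β * (Q - 2))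
include hβ

lemma reducedEnergyDeriv_half (hQ : 1 < Q) : reducedEnergyDeriv Q β (1 / 2) = 0 := by
  have hQ1 : Q - 1 ≠ 0 := by linarith
  have hlog : log (Q * ((1 - 1 / 2) / (Q - 1))) = log (Q * (1 / 2)) - log (Q - 1) := by
    rw [← log_div (by positivity) hQ1]
    ring_nf
  simp only [reducedEnergyDeriv, sitePotentialDeriv, hlog]
  field_simp
  linear_combination hβ

lemma reducedEnergyDeriv_peak (hQ : 1 < Q) : reducedEnergyDeriv Q β ((Q - 1) / Q) = 0 := by
  have hQ1 : Q - 1 ≠ 0 := by linarith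
  have h1 : Q * ((Q - 1) / Q) = Q - 1 := by field_simp
  have h2 : Q * ((1 - (Q - 1) / Q) / (Q - 1)) = (Q - 1)⁻¹ := by field_simp; ring
  simp only [reducedEnergyDeriv, sitePotentialDeriv, h1, h2, log_inv]
  field_simp
  linear_combination Q * hβ

lemma reducedEnergy_peak (hQ : 1 < Q) : reducedEnergy Q β ((Q - 1) / Q) = 0 := by
  have hQ1 : Q - 1 ≠ 0 := by linarith
  have h1 : Q * ((Q - 1) / Q) = Q - 1 := by field_simp
  have h2 : Q * ((1 - (Q - 1) / Q) / (Q - 1)) = (Q - 1)⁻¹ := by field_simp; ring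
  have h3 : Q * (1 / Q) = 1 := by field_simp
  simp only [reducedEnergy, sitePotential, h1, h2, h3, log_inv, log_one]
  field_simp
  linear_combination Q * (Q - 2) * hβ

lemma reducedEnergyDeriv_pos_of_lt_half (hQ : 2 < Q) {t : ℝ} (ht : t ∈ Ioo (1 / Q) (1 / 2)) :
    0 < reducedEnergyDeriv Q β t := by
  have h := (strictConcaveOn_reducedEnergyDeriv (Q := Q) (β := β) (by linarith)).lt_on_openSegment
    (⟨by positivity, (one_div_lt_half hQ).le⟩ : 1 / Q ∈ Ioc (0 : ℝ) (1 / 2))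
    ⟨by norm_num, le_rfl⟩
    (one_div_lt_half hQ).ne (by rwa [openSegment_eq_Ioo (one_div_lt_half hQ)])
  rwa [reducedEnergyDeriv_one_div (by linarith), reducedEnergyDeriv_half hβ (by linarith),
    min_self] at h

lemma reducedEnergyDeriv_neg_of_half_lt (hQ : 2 < Q) {t : ℝ}
    (ht : t ∈ Ioo (1 / 2) ((Q - 1) / Q)) :
    reducedEnergyDeriv Q β t < 0 := by
  have h := (strictConvexOn_reducedEnergyDeriv (Q := Q) (β := β) (by linarith)).lt_on_openSegment
    (⟨le_rfl, by norm_num⟩ : (1 / 2 : ℝ) ∈ Ico (1 / 2 : ℝ) 1)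
    ⟨(half_lt_peak hQ).le, peak_lt_one (by linarith)⟩
    (half_lt_peak hQ).ne (by rwa [openSegment_eq_Ioo (half_lt_peak hQ)])
  rwa [reducedEnergyDeriv_half hβ (by linarith), reducedEnergyDeriv_peak hβ (by linarith),
    max_self] at h

lemma reducedEnergyDeriv_pos_of_peak_lt (hQ : 2 < Q) {t : ℝ} (ht : t ∈ Ioo ((Q - 1) / Q) 1) :
    0 < reducedEnergyDeriv Q β t := by
  have h12 := (half_lt_peak hQ).trans ht.1
  have h := (strictConvexOn_reducedEnergyDeriv (Q := Q) (β := β) (by linarith)).lt_on_openSegment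
    (⟨le_rfl, by norm_num⟩ : (1 / 2 : ℝ) ∈ Ico (1 / 2 : ℝ) 1) ⟨h12.le, ht.2⟩ h12.ne
    (by rw [openSegment_eq_Ioo h12]; exact ⟨half_lt_peak hQ, ht.1⟩)
  rw [reducedEnergyDeriv_half hβ (by linarith), reducedEnergyDeriv_peak hβ (by linarith)] at h
  exact (lt_max_iff.1 h).resolve_left (lt_irrefl 0)

theorem reducedEnergy_pos (hQ : 2 < Q) (hs : s ∈ Ioo (1 / Q) 1) (hs' : s ≠ (Q - 1) / Q) :
    0 < reducedEnergy Q β s := by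
  have hQ1 : 1 < Q := by linarith
  have hQ0 : 0 < 1 / Q := by positivity
  have h12 := one_div_lt_half hQ
  have h2p := half_lt_peak hQ
  rcases le_or_gt s (1 / 2) with hle | hgt
  · have h := strictMonoOn_reducedEnergy hQ1 hQ0 (by norm_num)
      (fun t ht => reducedEnergyDeriv_pos_of_lt_half hβ hQ ht) ⟨le_rfl, h12.le⟩
      ⟨hs.1.le, hle⟩ hs.1
    rwa [reducedEnergy_one_div hQ1] at h
  rcases hs'.lt_or_gt with hlt | hgt'
  · have h := strictAntiOn_reducedEnergy hQ1 (by norm_num) (peak_lt_one (by linarith))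
      (fun t ht => reducedEnergyDeriv_neg_of_half_lt hβ hQ ht) ⟨hgt.le, hlt.le⟩
      ⟨h2p.le, le_rfl⟩ hlt
    rwa [reducedEnergy_peak hβ hQ1] at h
  · have h := strictMonoOn_reducedEnergy hQ1 (by linarith) hs.2
      (fun t ht => reducedEnergyDeriv_pos_of_peak_lt hβ hQ ⟨ht.1, ht.2.trans hs.2⟩)
      ⟨le_rfl, hgt'.le⟩ ⟨hgt'.le, le_rfl⟩ hgt'
    rwa [reducedEnergy_peak hβ hQ1] at h

lemma reducedEnergy_nonneg (hQ : 2 < Q) (hs : s ∈ Ico (1 / Q) 1) :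
    0 ≤ reducedEnergy Q β s := by
  rcases hs.1.eq_or_lt with rfl | hs₁
  · rw [reducedEnergy_one_div (by linarith)]
  rcases eq_or_ne s ((Q - 1) / Q) with rfl | hs'
  · rw [reducedEnergy_peak hβ (by linarith)]
  exact (reducedEnergy_pos hβ hQ ⟨hs₁, hs.2⟩ hs').le

end CriticalReducedEnergy

section GroundStates

open Real

variable {q : ℕ} {β : ℝ}

lemma simplexH_eq_stdSimplex : simplexH q = stdSimplex ℝ (Fin q) := by
  ext x
  exact and_comm

lemma mem_minSetF_zero_iff [NeZero q] {x : Fin q → ℝ} :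
    x ∈ minSetF q β 0 ↔ x ∈ stdSimplex ℝ (Fin q) ∧
      IsMinOn (fun y => ∑ k, sitePotential q β (y k)) (stdSimplex ℝ (Fin q)) x := by
  simp only [minSetF, simplexH_eq_stdSimplex, fFE_zero_eq_sum, isMinOn_iff]
  rfl

lemma minSetF_zero_nonempty [NeZero q] : (minSetF q β 0).Nonempty := by
  obtain ⟨x, hxs, hx⟩ := (isCompact_stdSimplex ℝ (Fin q)).exists_isMinOn
    ⟨_, single_mem_stdSimplex ℝ (0 : Fin q)⟩
    (continuous_finsetSum _ fun k _ =>
      continuous_sitePotential.comp (continuous_apply k)).continuousOn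
  exact ⟨x, mem_minSetF_zero_iff.2 ⟨hxs, hx⟩⟩

lemma fFE_twoLevel [NeZero q] (j : Fin q) (s : ℝ) :
    fFE q β 0 (twoLevel q j s) = fFE q β 0 (fun _ => 1 / (q : ℝ)) + reducedEnergy q β s := by
  simp only [fFE_zero_eq_sum, twoLevel]
  rw [sum_ite_eq_add_mul (sitePotential q β)]
  simp only [Finset.sum_const, Finset.card_univ, Fintype.card_fin, nsmul_eq_mul, reducedEnergy]
  ring

lemma betaC_pos (hq : 3 ≤ q) : 0 < betaC q := by
  have hq3 : (3 : ℝ) ≤ q := by exact_mod_cast hq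
  unfold betaC
  exact mul_pos (div_pos (by linarith) (by linarith)) (log_pos (by linarith))

lemma two_mul_sub_one_mul_log_eq_betaC_mul (hq : 3 ≤ q) :
    2 * ((q : ℝ) - 1) * log ((q : ℝ) - 1) = betaC q * ((q : ℝ) - 2) := by
  have hq3 : (3 : ℝ) ≤ q := by exact_mod_cast hq
  unfold betaC
  field_simp [show (q : ℝ) - 2 ≠ 0 by linarith]

lemma exists_eq_twoLevel_of_mem_minSetF [NeZero q] (hq : 2 ≤ q) (hβ : 0 < β) {x : Fin q → ℝ}
    (hx : x ∈ minSetF q β 0) : ∃ j, ∃ s ∈ Ico (1 / q : ℝ) 1, x = twoLevel q j s :=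
  exists_eq_twoLevel_of_isMinOn hq hβ (mem_minSetF_zero_iff.1 hx).1 (mem_minSetF_zero_iff.1 hx).2

lemma uniform_mem_minSetF_betaC [NeZero q] (hq : 3 ≤ q) :
    (fun _ => 1 / (q : ℝ)) ∈ minSetF q (betaC q) 0 := by
  have hq3 : (3 : ℝ) ≤ q := by exact_mod_cast hq
  obtain ⟨x, hx⟩ := minSetF_zero_nonempty (q := q) (β := betaC q)
  obtain ⟨j, s, hs, rfl⟩ := exists_eq_twoLevel_of_mem_minSetF (by omega) (betaC_pos hq) hx
  refine ⟨twoLevel_one_div (by omega) j ▸ twoLevel_mem_simplexH (by omega) j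
    ⟨by positivity, div_le_one_of_le₀ (by linarith) (by positivity)⟩, fun y hy => ?_⟩
  have h := hx.2 y hy
  rw [fFE_twoLevel] at h
  linarith [reducedEnergy_nonneg (two_mul_sub_one_mul_log_eq_betaC_mul hq) (by linarith) hs]

theorem minSetF_betaC_eq [NeZero q] (hq : 3 ≤ q) :
    minSetF q (betaC q) 0 = insert (fun _ => 1 / (q : ℝ))
      (Set.range fun j i => if i = j then ((q : ℝ) - 1) / q else 1 / (q * ((q : ℝ) - 1))) := by
  have hq3 : (3 : ℝ) ≤ q := by exact_mod_cast hq
  have hcrit := two_mul_sub_one_mul_log_eq_betaC_mul hq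
  have hu := uniform_mem_minSetF_betaC hq
  ext x
  constructor
  · intro hx
    obtain ⟨j, s, hs, rfl⟩ := exists_eq_twoLevel_of_mem_minSetF (by omega) (betaC_pos hq) hx
    have hle := hx.2 _ hu.1
    rw [fFE_twoLevel] at hle
    rcases hs.1.eq_or_lt with rfl | hs₁
    · exact Or.inl (twoLevel_one_div (by omega) j)
    have hpeak : s = (q - 1) / q := by
      by_contra hne
      linarith [reducedEnergy_pos hcrit (by linarith) ⟨hs₁, hs.2⟩ hne]
    exact Or.inr ⟨j, by rw [hpeak, twoLevel_peak (by omega)]⟩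
  · rintro (rfl | ⟨j, rfl⟩)
    · exact hu
    beta_reduce
    rw [← twoLevel_peak (by omega) j]
    refine ⟨twoLevel_mem_simplexH (by omega) j
      ⟨div_nonneg (by linarith) (by positivity), (peak_lt_one (by linarith)).le⟩,
      fun y hy => ?_⟩
    rw [fFE_twoLevel, reducedEnergy_peak hcrit (by linarith), add_zero]
    exact hu.2 y hy

end GroundStates

/-- At h = 0 and β = β_c, the set of global minimum points of f_{β_c,0} on ℋ
consists of exactly q+1 points: the uniform vector together with the q
coordinate permutations of ((q-1)/q, 1/(q(q-1)), …, 1/(q(q-1))). -/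
theorem stmt_4 (q : ℕ) [NeZero q] (hq : 3 ≤ q) :
    minSetF q (betaC q) 0 =
      insert (fun _ => 1 / (q : ℝ))
        {y | ∃ π : Equiv.Perm (Fin q),
          y = (fun i : Fin q =>
            if i = 0 then ((q : ℝ) - 1) / q else 1 / (q * ((q : ℝ) - 1))) ∘ π} ∧
    (minSetF q (betaC q) 0).ncard = q + 1 := by
  have hq3 : (3 : ℝ) ≤ q := by exact_mod_cast hq
  rw [minSetF_betaC_eq hq, setOf_exists_perm_comp_ite_eq_range]
  refine ⟨rfl, ?_⟩
  rw [ncard_insert_const_range_ite, Fintype.card_fin]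
  · rw [Ne, div_eq_div_iff (by positivity) (by nlinarith)]
    nlinarith [mul_pos (by linarith : (0 : ℝ) < q)
      (by nlinarith : (0 : ℝ) < ((q : ℝ) - 1) ^ 2 - 1)]
  · rw [Ne, div_eq_div_iff (by positivity) (by positivity)]
    nlinarith [mul_pos (by linarith : (0 : ℝ) < q) (by linarith : (0 : ℝ) < (q : ℝ) - 2)]

end CWP
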